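/- arXiv:1507.03896 — 2 statements merged into one kernel-verified Lean document; each statement's English description precedes it below -/
import Mathlib

section
/- Let f, g be two nonzero vectors in a complex (or real) inner product space with f ≠ ±g after normalization, and define f_t = (1-t)g + t f for t ∈ [0,1], assumed nonzero for all t. Then the norm of the derivative of the normalized path t ↦ f_t/‖f_t‖ satisfies ‖(d/dt)(f_t/‖f_t‖)‖ ≤ ‖f‖·‖g‖/‖f_t‖². -/
/-!
Differentiating `‖c‖⁻¹ • c` gives `‖c‖⁻¹` times the component of `c' = f - g` orthogonal to `c`,
whose squared norm is the Gram determinant of `c, c'` divided by `‖c‖²`. Along the segment this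
Gram determinant is constant, equal to `‖f‖²‖g‖² - ⟪f, g⟫² ≤ ‖f‖²‖g‖²`.
-/

open scoped RealInnerProductSpace

section

variable {H : Type*} [NormedAddCommGroup H] [InnerProductSpace ℝ H]

theorem HasDerivAt.norm_of_ne_zero {γ : ℝ → H} {v : H} {t : ℝ} (h : HasDerivAt γ v t)
    (h0 : γ t ≠ 0) : HasDerivAt (fun s => ‖γ s‖) (⟪γ t, v⟫ / ‖γ t‖) t := by
  have hpos : 0 < ‖γ t‖ := norm_pos_iff.mpr h0
  have hsqrt := h.norm_sq.sqrt (by positivity)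
  simp only [Real.sqrt_sq (norm_nonneg _)] at hsqrt
  convert hsqrt using 1
  field_simp

theorem HasDerivAt.inv_norm_smul {γ : ℝ → H} {v : H} {t : ℝ} (h : HasDerivAt γ v t)
    (h0 : γ t ≠ 0) :
    HasDerivAt (fun s => ‖γ s‖⁻¹ • γ s) (‖γ t‖⁻¹ • (v - (⟪γ t, v⟫ / ‖γ t‖ ^ 2) • γ t)) t := by
  have hpos : 0 < ‖γ t‖ := norm_pos_iff.mpr h0
  refine (((h.norm_of_ne_zero h0).inv hpos.ne').smul h).congr_deriv ?_
  rw [smul_sub, smul_smul, sub_eq_add_neg, ← neg_smul]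
  congr 2
  field_simp

theorem norm_inv_norm_smul_sub_orthogonal (x v : H) (hx : x ≠ 0) :
    ‖‖x‖⁻¹ • (v - (⟪x, v⟫ / ‖x‖ ^ 2) • x)‖ = √(‖x‖ ^ 2 * ‖v‖ ^ 2 - ⟪x, v⟫ ^ 2) / ‖x‖ ^ 2 := by
  have hpos : 0 < ‖x‖ := norm_pos_iff.mpr hx
  have hsq : ‖v - (⟪x, v⟫ / ‖x‖ ^ 2) • x‖ ^ 2 = (‖x‖ ^ 2 * ‖v‖ ^ 2 - ⟪x, v⟫ ^ 2) / ‖x‖ ^ 2 := by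
    rw [norm_sub_sq_real, norm_smul, real_inner_smul_right, real_inner_comm x v, Real.norm_eq_abs,
      mul_pow, sq_abs]
    field_simp
    ring
  rw [norm_smul, norm_inv, norm_norm, ← Real.sqrt_sq (norm_nonneg (v - _)), hsq,
    Real.sqrt_div' _ (by positivity), Real.sqrt_sq hpos.le]
  field_simp

theorem gram_segment (f g : H) (t : ℝ) :
    ‖(1 - t) • g + t • f‖ ^ 2 * ‖f - g‖ ^ 2 - ⟪(1 - t) • g + t • f, f - g⟫ ^ 2
      = ‖f‖ ^ 2 * ‖g‖ ^ 2 - ⟪f, g⟫ ^ 2 := by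
  simp only [← real_inner_self_eq_norm_sq, inner_add_left, inner_add_right,
    inner_sub_left, inner_sub_right, real_inner_smul_left, real_inner_smul_right,
    real_inner_comm g f]
  ring

end

theorem stmt_5_general {H : Type*} [NormedAddCommGroup H] [InnerProductSpace ℝ H]
    (f g : H)
    (c : ℝ → H) (hc : ∀ t, c t = (1 - t) • g + t • f)
    (hne : ∀ t ∈ Set.Icc (0 : ℝ) 1, c t ≠ 0) :
    ∀ t ∈ Set.Icc (0 : ℝ) 1,
      ‖deriv (fun τ => ‖c τ‖⁻¹ • c τ) t‖ ≤ ‖f‖ * ‖g‖ / ‖c t‖ ^ 2 := by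
  intro t ht
  obtain rfl : c = fun s => (1 - s) • g + s • f := funext hc
  have hderiv : HasDerivAt (fun s : ℝ => (1 - s) • g + s • f) (f - g) t := by
    have h := (((hasDerivAt_id t).const_sub 1).smul_const g).add ((hasDerivAt_id t).smul_const f)
    exact h.congr_deriv (by module)
  rw [(hderiv.inv_norm_smul (hne t ht)).deriv, norm_inv_norm_smul_sub_orthogonal _ _ (hne t ht),
    gram_segment]
  gcongr
  calc √(‖f‖ ^ 2 * ‖g‖ ^ 2 - ⟪f, g⟫ ^ 2) ≤ √((‖f‖ * ‖g‖) ^ 2) :=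
        Real.sqrt_le_sqrt (by rw [mul_pow]; linarith [sq_nonneg ⟪f, g⟫])
    _ = ‖f‖ * ‖g‖ := Real.sqrt_sq (by positivity)

theorem stmt_5 {H : Type*} [NormedAddCommGroup H] [InnerProductSpace ℝ H]
    [FiniteDimensional ℝ H] (f g : H) (hf : f ≠ 0) (hg : g ≠ 0)
    (hfg : ‖f‖⁻¹ • f ≠ ‖g‖⁻¹ • g) (hfg' : ‖f‖⁻¹ • f ≠ -(‖g‖⁻¹ • g))
    (c : ℝ → H) (hc : ∀ t, c t = (1 - t) • g + t • f)
    (hne : ∀ t ∈ Set.Icc (0 : ℝ) 1, c t ≠ 0) :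
    ∀ t ∈ Set.Icc (0 : ℝ) 1,
      ‖deriv (fun τ => ‖c τ‖⁻¹ • c τ) t‖ ≤ ‖f‖ * ‖g‖ / ‖c t‖ ^ 2 :=
  stmt_5_general f g c hc hne
end

section
/- Let f ∈ S be a unit-norm polynomial system and ζ ∈ ℙ(ℂ^{n+1}) a zero of f at which Df(ζ)|_{ζ^⊥} is invertible. For a tangent direction ḟ define ζ̇(ḟ) = (Df(ζ)|_{ζ^⊥})^{-1} ḟ(ζ). Then the average of ‖ζ̇(ḟ)‖² over ḟ uniform on the unit sphere of T_f S equals (N - 1/2)^{-1}·‖(Df(ζ)|_{ζ^⊥})^{-1}‖_F². -/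
/-!
By rotation invariance of the sphere measure σ on `ℝᵐ` (reflections act transitively on vectors
of a given norm), the second moment `∫ ⟪x, u⟫² dσ` depends only on `‖x‖`; summing over an
orthonormal basis gives `∫ ⟪x, u⟫² dσ = σ(S) / m · ‖x‖²`, hence
`∫ ‖A u‖² dσ = σ(S) / m · ‖A‖²_HS` for every linear map `A`. For `A = L⁻¹ ∘ ev ∘ ι` the adjoint of
`ev ∘ ι` is an isometry, because `ev†` is an isometry with values in `f^⊥ = range ι`; so
`‖A‖_HS = ‖L⁻¹‖_HS`, and `m = 2N - 1` gives the factor `(N - 1/2)⁻¹ / 2`.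
-/

open MeasureTheory Metric Set
open scoped Pointwise RealInnerProductSpace InnerProduct

section UnitSphere

variable {E : Type*} [NormedAddCommGroup E] [NormedSpace ℝ E]

noncomputable def LinearIsometryEquiv.unitSphereHomeomorph (T : E ≃ₗᵢ[ℝ] E) :
    sphere (0 : E) 1 ≃ₜ sphere (0 : E) 1 :=
  T.toHomeomorph.subtype fun x => by simp

theorem LinearIsometryEquiv.measurePreserving_unitSphereHomeomorph [MeasurableSpace E]
    [BorelSpace E] {μ : Measure E} (T : E ≃ₗᵢ[ℝ] E) (hT : MeasurePreserving T μ μ) :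
    MeasurePreserving T.unitSphereHomeomorph μ.toSphere μ.toSphere := by
  have hm := T.unitSphereHomeomorph.continuous.measurable
  refine ⟨hm, Measure.ext fun s hs => ?_⟩
  rw [Measure.map_apply hm hs, Measure.toSphere_apply' _ (hm hs), Measure.toSphere_apply' _ hs]
  have himage : ((↑) '' (T.unitSphereHomeomorph ⁻¹' s) : Set E) = T ⁻¹' ((↑) '' s) := by
    ext x
    constructor
    · rintro ⟨u, hu, rfl⟩
      exact ⟨_, hu, rfl⟩
    · rintro ⟨v, hv, hvx⟩
      refine ⟨T.unitSphereHomeomorph.symm v, by simpa using hv, ?_⟩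
      simp [unitSphereHomeomorph, hvx]
  have hsmul : Ioo (0 : ℝ) 1 • (T ⁻¹' ((↑) '' s)) = T ⁻¹' (Ioo (0 : ℝ) 1 • ((↑) '' s)) := by
    ext x
    simp only [mem_preimage, Set.mem_smul]
    constructor
    · rintro ⟨r, hr, y, hy, rfl⟩
      exact ⟨r, hr, T y, hy, by simp⟩
    · rintro ⟨r, hr, y, hy, hyx⟩
      exact ⟨r, hr, T.symm y, by simpa using hy, T.injective (by simp [hyx])⟩
  rw [himage, hsmul]
  congr 1
  exact hT.measure_preimage_equiv (f := T.toHomeomorph.toMeasurableEquiv) _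

end UnitSphere

section HilbertSchmidt

variable {E F G ι κ : Type*}
  [NormedAddCommGroup E] [InnerProductSpace ℝ E] [FiniteDimensional ℝ E]
  [NormedAddCommGroup F] [InnerProductSpace ℝ F] [FiniteDimensional ℝ F]
  [NormedAddCommGroup G] [InnerProductSpace ℝ G] [FiniteDimensional ℝ G]
  [Fintype ι] [Fintype κ]

theorem sum_norm_sq_adjoint_apply (A : E →L[ℝ] F) (b : OrthonormalBasis ι ℝ E)
    (c : OrthonormalBasis κ ℝ F) :
    ∑ j, ‖(A†) (c j)‖ ^ 2 = ∑ i, ‖A (b i)‖ ^ 2 := by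
  simp_rw [← b.sum_sq_inner_right, ContinuousLinearMap.adjoint_inner_right]
  rw [Finset.sum_comm]
  simp_rw [c.sum_sq_inner_left]

theorem sum_norm_sq_comp_apply_of_norm_adjoint_apply (L : F →L[ℝ] G) (C : E →L[ℝ] F)
    (hC : ∀ w, ‖(C†) w‖ = ‖w‖) (b : OrthonormalBasis ι ℝ E) (c : OrthonormalBasis κ ℝ F) :
    ∑ i, ‖(L ∘L C) (b i)‖ ^ 2 = ∑ j, ‖L (c j)‖ ^ 2 := by
  set d := stdOrthonormalBasis ℝ G
  calc ∑ i, ‖(L ∘L C) (b i)‖ ^ 2 = ∑ k, ‖((L ∘L C)†) (d k)‖ ^ 2 :=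
        (sum_norm_sq_adjoint_apply (L ∘L C) b d).symm
    _ = ∑ k, ‖(L†) (d k)‖ ^ 2 := by simp [ContinuousLinearMap.adjoint_comp, hC]
    _ = ∑ j, ‖L (c j)‖ ^ 2 := sum_norm_sq_adjoint_apply L c d

end HilbertSchmidt

theorem norm_adjoint_comp_linearIsometry_apply {E F G : Type*}
    [NormedAddCommGroup E] [InnerProductSpace ℝ E] [CompleteSpace E]
    [NormedAddCommGroup F] [InnerProductSpace ℝ F] [CompleteSpace F]
    [NormedAddCommGroup G] [InnerProductSpace ℝ G] [CompleteSpace G]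
    (T : E →L[ℝ] F) (hT : T ∘L T† = 1) (ι : G →ₗᵢ[ℝ] E)
    (hrange : ∀ w, (T†) w ∈ LinearMap.range ι.toLinearMap) (w : F) :
    ‖((T ∘L ι.toContinuousLinearMap)†) w‖ = ‖w‖ := by
  obtain ⟨x, hx⟩ := hrange w
  have hι : (ι.toContinuousLinearMap)† ∘L ι.toContinuousLinearMap = 1 :=
    (ι.toContinuousLinearMap.norm_map_iff_adjoint_comp_self).1 ι.norm_map
  have hT' : ∀ w, ‖(T†) w‖ = ‖w‖ :=
    ((T†).norm_map_iff_adjoint_comp_self).2 (by rw [ContinuousLinearMap.adjoint_adjoint, hT])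
  have hx' : ι.toContinuousLinearMap x = (T†) w := hx
  rw [ContinuousLinearMap.adjoint_comp, ContinuousLinearMap.comp_apply, ← hx',
    ← ContinuousLinearMap.comp_apply, hι, one_apply_eq_self, ← hT', ← hx',
    LinearIsometry.coe_toContinuousLinearMap, ι.norm_map]

section SphereMoments

variable {E F ι : Type*}
  [NormedAddCommGroup E] [InnerProductSpace ℝ E] [FiniteDimensional ℝ E]
  [MeasurableSpace E] [BorelSpace E]
  [NormedAddCommGroup F] [InnerProductSpace ℝ F] [FiniteDimensional ℝ F]

theorem integrable_inner_sq_toSphere (x : E) :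
    Integrable (fun u : sphere (0 : E) 1 => ⟪x, (u : E)⟫ ^ 2) (volume : Measure E).toSphere :=
  (by fun_prop : Continuous fun u : sphere (0 : E) 1 => ⟪x, (u : E)⟫ ^ 2)
    |>.integrable_of_hasCompactSupport (HasCompactSupport.of_compactSpace _)

theorem integral_inner_sq_toSphere_eq_of_norm_eq {x y : E} (h : ‖x‖ = ‖y‖) :
    ∫ u, ⟪x, (u : E)⟫ ^ 2 ∂(volume : Measure E).toSphere =
      ∫ u, ⟪y, (u : E)⟫ ^ 2 ∂(volume : Measure E).toSphere := by
  set R := Submodule.reflection (ℝ ∙ (x - y))ᗮ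
  have hR : ∀ u : E, ⟪y, R u⟫ = ⟪x, u⟫ := fun u => by
    rw [← Submodule.reflection_sub h, LinearIsometryEquiv.inner_map_map]
  have hpres := R.measurePreserving_unitSphereHomeomorph R.measurePreserving
  symm
  rw [← hpres.integral_comp' (f := R.unitSphereHomeomorph.toMeasurableEquiv)]
  exact integral_congr_ae (Filter.Eventually.of_forall fun u => by
    simp [LinearIsometryEquiv.unitSphereHomeomorph, hR])

theorem integral_inner_sq_toSphere (x : E) :
    ∫ u, ⟪x, (u : E)⟫ ^ 2 ∂(volume : Measure E).toSphere =
      (volume : Measure E).toSphere.real univ / Module.finrank ℝ E * ‖x‖ ^ 2 := by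
  rcases eq_or_ne x 0 with rfl | hx
  · simp
  have : Nontrivial E := ⟨⟨x, 0, hx⟩⟩
  set b := stdOrthonormalBasis ℝ E
  have htotal : ∑ k, ∫ u, ⟪b k, (u : E)⟫ ^ 2 ∂(volume : Measure E).toSphere =
      (volume : Measure E).toSphere.real univ := by
    rw [← integral_finsetSum _ fun k _ => integrable_inner_sq_toSphere (b k)]
    simp [b.sum_sq_inner_right, norm_eq_of_mem_sphere]
  have hbasis : ∀ k, ∫ u, ⟪x, (u : E)⟫ ^ 2 ∂(volume : Measure E).toSphere =
      ‖x‖ ^ 2 * ∫ u, ⟪b k, (u : E)⟫ ^ 2 ∂(volume : Measure E).toSphere := fun k => by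
    rw [integral_inner_sq_toSphere_eq_of_norm_eq (y := ‖x‖ • b k)
        (by rw [norm_smul, b.orthonormal.1 k, norm_norm, mul_one]),
      ← integral_const_mul]
    simp [real_inner_smul_left, mul_pow]
  have hdim : (Module.finrank ℝ E : ℝ) ≠ 0 := Nat.cast_ne_zero.2 Module.finrank_pos.ne'
  have hsum : (Module.finrank ℝ E : ℝ) * ∫ u, ⟪x, (u : E)⟫ ^ 2 ∂(volume : Measure E).toSphere =
      ‖x‖ ^ 2 * (volume : Measure E).toSphere.real univ := by
    rw [← htotal, Finset.mul_sum, ← Finset.sum_congr rfl fun k _ => hbasis k, Finset.sum_const,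
      Finset.card_univ, Fintype.card_fin, nsmul_eq_mul]
  field_simp
  linarith

theorem integral_norm_sq_toSphere [Fintype ι] (A : E →L[ℝ] F) (b : OrthonormalBasis ι ℝ E) :
    ∫ u, ‖A u‖ ^ 2 ∂(volume : Measure E).toSphere =
      (volume : Measure E).toSphere.real univ / Module.finrank ℝ E * ∑ i, ‖A (b i)‖ ^ 2 := by
  set c := stdOrthonormalBasis ℝ F
  have hexpand : ∀ u : E, ‖A u‖ ^ 2 = ∑ j, ⟪(A†) (c j), u⟫ ^ 2 := fun u => by
    simp_rw [ContinuousLinearMap.adjoint_inner_left, c.sum_sq_inner_right]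
  conv_lhs => simp only [hexpand]
  rw [integral_finsetSum _ fun j _ => integrable_inner_sq_toSphere _]
  simp_rw [integral_inner_sq_toSphere, ← Finset.mul_sum, sum_norm_sq_adjoint_apply A b c]

end SphereMoments

/- The Weyl space `H_{(d)} ≅ ℂ^N` is modelled as `ℝ^{2N}`, evaluation at `ζ` as the real-linear
coisometry `ev : ℝ^{2N} → ℝ^{2n}` (an isometry on `C_ζ = (ker ev)ᗮ`), `T_f S = f^⊥` as the range of
the isometry `ι`, and `Linv` stands for `(Df(ζ)|_{ζ^⊥})⁻¹`. The complex squared Frobenius norm is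
half the real one, whence the final `/ 2`. -/
theorem stmt_11_general {N n : ℕ} (hN : 1 ≤ N)
    (f : EuclideanSpace ℝ (Fin (2 * N)))
    (ev : EuclideanSpace ℝ (Fin (2 * N)) →L[ℝ] EuclideanSpace ℝ (Fin (2 * n)))
    (hevf : ev f = 0)
    (hco : ev.comp (ContinuousLinearMap.adjoint ev) =
      ContinuousLinearMap.id ℝ (EuclideanSpace ℝ (Fin (2 * n))))
    (ι : EuclideanSpace ℝ (Fin (2 * N - 1)) →ₗᵢ[ℝ] EuclideanSpace ℝ (Fin (2 * N)))
    (hι : LinearMap.range ι.toLinearMap = (ℝ ∙ f)ᗮ)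
    (Linv : EuclideanSpace ℝ (Fin (2 * n)) →L[ℝ] EuclideanSpace ℝ (Fin (2 * n))) :
    (((volume : Measure (EuclideanSpace ℝ (Fin (2 * N - 1)))).toSphere
          Set.univ).toReal)⁻¹ *
        ∫ u, ‖Linv (ev (ι (u : EuclideanSpace ℝ (Fin (2 * N - 1)))))‖ ^ 2
          ∂((volume : Measure (EuclideanSpace ℝ (Fin (2 * N - 1)))).toSphere) =
      ((N : ℝ) - 1 / 2)⁻¹ *
        ((∑ j, ‖Linv (EuclideanSpace.single j 1)‖ ^ 2) / 2) := by
  have hrange : ∀ w, (ev†) w ∈ LinearMap.range ι.toLinearMap := fun w => by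
    rw [hι, Submodule.mem_orthogonal_singleton_iff_inner_right,
      ContinuousLinearMap.adjoint_inner_right, hevf, inner_zero_left]
  set C := ev ∘L ι.toContinuousLinearMap
  have hC : ∀ w, ‖(C†) w‖ = ‖w‖ :=
    norm_adjoint_comp_linearIsometry_apply ev (by rw [hco]; rfl) ι hrange
  have hint : ∫ u, ‖Linv (ev (ι (u : EuclideanSpace ℝ (Fin (2 * N - 1)))))‖ ^ 2
        ∂((volume : Measure (EuclideanSpace ℝ (Fin (2 * N - 1)))).toSphere) =
      (volume : Measure (EuclideanSpace ℝ (Fin (2 * N - 1)))).toSphere.real univ /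
        (2 * N - 1 : ℕ) * ∑ j, ‖Linv (EuclideanSpace.single j 1)‖ ^ 2 := by
    have h := integral_norm_sq_toSphere (Linv ∘L C) (EuclideanSpace.basisFun _ ℝ)
    rw [finrank_euclideanSpace_fin, sum_norm_sq_comp_apply_of_norm_adjoint_apply Linv C hC _
      (EuclideanSpace.basisFun _ ℝ)] at h
    simp only [EuclideanSpace.basisFun_apply] at h
    exact h
  have : NeZero (2 * N - 1) := ⟨by omega⟩
  have hσ : (volume : Measure (EuclideanSpace ℝ (Fin (2 * N - 1)))).toSphere.real univ ≠ 0 := by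
    have : NeZero (volume : Measure (EuclideanSpace ℝ (Fin (2 * N - 1)))).toSphere :=
      ⟨Measure.toSphere_ne_zero _⟩
    exact measureReal_univ_ne_zero
  rw [← measureReal_def, hint, Nat.cast_sub (by omega), Nat.cast_mul, Nat.cast_ofNat, Nat.cast_one]
  field_simp

theorem stmt_11 {N n : ℕ} (hN : 1 ≤ N)
    (f : EuclideanSpace ℝ (Fin (2 * N))) (hf : ‖f‖ = 1)
    (ev : EuclideanSpace ℝ (Fin (2 * N)) →L[ℝ] EuclideanSpace ℝ (Fin (2 * n)))
    (hevf : ev f = 0)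
    (hco : ev.comp (ContinuousLinearMap.adjoint ev) =
      ContinuousLinearMap.id ℝ (EuclideanSpace ℝ (Fin (2 * n))))
    (ι : EuclideanSpace ℝ (Fin (2 * N - 1)) →ₗᵢ[ℝ] EuclideanSpace ℝ (Fin (2 * N)))
    (hι : LinearMap.range ι.toLinearMap = (ℝ ∙ f)ᗮ)
    (Linv : EuclideanSpace ℝ (Fin (2 * n)) →L[ℝ] EuclideanSpace ℝ (Fin (2 * n))) :
    (((volume : Measure (EuclideanSpace ℝ (Fin (2 * N - 1)))).toSphere
          Set.univ).toReal)⁻¹ *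
        ∫ u, ‖Linv (ev (ι (u : EuclideanSpace ℝ (Fin (2 * N - 1)))))‖ ^ 2
          ∂((volume : Measure (EuclideanSpace ℝ (Fin (2 * N - 1)))).toSphere) =
      ((N : ℝ) - 1 / 2)⁻¹ *
        ((∑ j, ‖Linv (EuclideanSpace.single j 1)‖ ^ 2) / 2) :=
  stmt_11_general hN f ev hevf hco ι hι Linv
end
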